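/- Let μ and ν be finite Borel measures on ℝ with continuous positive densities h and h' respectively, and suppose that for all w ≤ s we have h(s)·h'(w) ≤ h'(s)·h(w). Then for all s ≤ s', (∫_{−∞}^{s} h(w) dw)·(∫_{−∞}^{s'} h'(w) dw) ≥ (∫_{−∞}^{s'} h(w) dw)·(∫_{−∞}^{s} h'(w) dw). -/

import Mathlib

/-!
Split `Iic s'` as `Iic s ∪ Ioc s s'`; after cancelling the common term `∫_{Iic s} h * ∫_{Iic s} h'`
the claim becomes `∫_{Ioc s s'} h * ∫_{Iic s} h' ≤ ∫_{Ioc s s'} h' * ∫_{Iic s} h`, which is the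
likelihood-ratio inequality `h x * h' y ≤ h' x * h y` (for `y ≤ s < x`) integrated over `y` and then `x`.
-/

open MeasureTheory Set

section CrossIntegral

variable {α : Type*} [MeasurableSpace α] {μ : Measure α} {f g : α → ℝ} {A B : Set α}

theorem mul_setIntegral_le_mul_setIntegral_of_cross_le {x : α} (hA : MeasurableSet A)
    (hfA : IntegrableOn f A μ) (hgA : IntegrableOn g A μ)
    (hfg : ∀ y ∈ A, f x * g y ≤ g x * f y) :
    f x * ∫ y in A, g y ∂μ ≤ g x * ∫ y in A, f y ∂μ := by
  rw [← integral_const_mul, ← integral_const_mul]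
  exact setIntegral_mono_on (hgA.const_mul _) (hfA.const_mul _) hA hfg

theorem setIntegral_mul_setIntegral_le_of_cross_le (hA : MeasurableSet A) (hB : MeasurableSet B)
    (hfA : IntegrableOn f A μ) (hgA : IntegrableOn g A μ)
    (hfB : IntegrableOn f B μ) (hgB : IntegrableOn g B μ)
    (hfg : ∀ x ∈ B, ∀ y ∈ A, f x * g y ≤ g x * f y) :
    (∫ x in B, f x ∂μ) * ∫ y in A, g y ∂μ ≤ (∫ x in B, g x ∂μ) * ∫ y in A, f y ∂μ := by
  rw [← integral_mul_const, ← integral_mul_const]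
  exact setIntegral_mono_on (hfB.mul_const _) (hgB.mul_const _) hB fun x hx =>
    mul_setIntegral_le_mul_setIntegral_of_cross_le hA hfA hgA (hfg x hx)

end CrossIntegral

section LinearOrder

variable {α : Type*} [LinearOrder α] [TopologicalSpace α] [OrderClosedTopology α]
  [MeasurableSpace α] [OpensMeasurableSpace α] {μ : Measure α} {f g : α → ℝ}

theorem setIntegral_Iic_eq_add_setIntegral_Ioc {s s' : α} (hss : s ≤ s') (hf : Integrable f μ) :
    ∫ w in Iic s', f w ∂μ = (∫ w in Iic s, f w ∂μ) + ∫ w in Ioc s s', f w ∂μ := by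
  rw [← Iic_union_Ioc_eq_Iic hss,
    setIntegral_union (Iic_disjoint_Ioc le_rfl) measurableSet_Ioc hf.integrableOn hf.integrableOn]

theorem setIntegral_Iic_mul_le_of_likelihoodRatio_antitone (hf : Integrable f μ)
    (hg : Integrable g μ) (hfg : ∀ w s, w ≤ s → f s * g w ≤ g s * f w) {s s' : α} (hss : s ≤ s') :
    (∫ w in Iic s', f w ∂μ) * (∫ w in Iic s, g w ∂μ) ≤
      (∫ w in Iic s, f w ∂μ) * (∫ w in Iic s', g w ∂μ) := by
  have hcross : (∫ x in Ioc s s', f x ∂μ) * (∫ y in Iic s, g y ∂μ) ≤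
      (∫ x in Ioc s s', g x ∂μ) * ∫ y in Iic s, f y ∂μ :=
    setIntegral_mul_setIntegral_le_of_cross_le measurableSet_Iic measurableSet_Ioc
      hf.integrableOn hg.integrableOn hf.integrableOn hg.integrableOn
      fun x hx y hy => hfg y x (le_trans hy hx.1.le)
  rw [setIntegral_Iic_eq_add_setIntegral_Ioc hss hf, setIntegral_Iic_eq_add_setIntegral_Ioc hss hg]
  linarith

end LinearOrder

theorem cdf_ratio_mono_of_mlr_general (h h' : ℝ → ℝ)
    (hint : Integrable h) (hint' : Integrable h')
    (hlr : ∀ w s : ℝ, w ≤ s → h s * h' w ≤ h' s * h w) :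
    ∀ s s' : ℝ, s ≤ s' →
      (∫ w in Set.Iic s', h w) * (∫ w in Set.Iic s, h' w) ≤
        (∫ w in Set.Iic s, h w) * (∫ w in Set.Iic s', h' w) := fun _ _ hss =>
  setIntegral_Iic_mul_le_of_likelihoodRatio_antitone hint hint' hlr hss

/-- Monotone likelihood ratio implies monotonicity of the ratio of CDFs:
if `h, h'` are continuous positive integrable densities with `h s * h' w ≤ h' s * h w`
whenever `w ≤ s`, then for `s ≤ s'`,
`(∫_{-∞}^{s} h) * (∫_{-∞}^{s'} h') ≥ (∫_{-∞}^{s'} h) * (∫_{-∞}^{s} h')`. -/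
theorem cdf_ratio_mono_of_mlr (h h' : ℝ → ℝ) (hc : Continuous h) (hc' : Continuous h')
    (hpos : ∀ x, 0 < h x) (hpos' : ∀ x, 0 < h' x)
    (hint : Integrable h) (hint' : Integrable h')
    (hlr : ∀ w s : ℝ, w ≤ s → h s * h' w ≤ h' s * h w) :
    ∀ s s' : ℝ, s ≤ s' →
      (∫ w in Set.Iic s', h w) * (∫ w in Set.Iic s, h' w) ≤
        (∫ w in Set.Iic s, h w) * (∫ w in Set.Iic s', h' w) :=
  cdf_ratio_mono_of_mlr_general h h' hint hint' hlr
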